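/- Define real coefficients α(n,k,i), for natural numbers n, k, i with 2k ≤ n and 2i ≤ 2k, by the recurrence α(n,k,i) = 2^{k+i} · (n−k+i−1/2)^{\underline{k−i}} · (n−k)^{\underline{i}} · (n−2k+2i−1/2)^{\underline{2i}} / ((2i)^{\underline{2i}} · (n−k+i−1/2)^{\underline{i}}) − Σ_{l=0}^{i−1} ( (2(n−2k+i−l))^{\underline{2(i−l)}} / (2(i−l))^{\underline{2(i−l)}} ) · α(n, k−i+l, l), where x^{\underline{m}} = x(x−1)⋯(x−m+1) is the falling factorial with x^{\underline{0}} = 1, and set b(λ,n,k) = Σ_{i=0}^{max(k−1,0)} (λ^{n−2k+2i} / (2^{k−i} (k−i)!)) · (λ²−1)^{k−i} · α(n,k,i). Then for every natural number n, every real number λ, and every real x, P_n(λx) = Σ_{k=0}^{⌊n/2⌋} b(λ,n,k) · P_{n−2k}(x). -/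

import Mathlib

/-!
Expanding `((a x)² - 1)ⁿ = (a² (x² - 1) + (a² - 1))ⁿ` binomially inside Rodrigues' formula
gives, for `a ≠ 0`, `P_n(a x) = ∑_k a^(n-2k) (a² - 1)^k / (2^k k!) · P_{n-k}^(k)(x)`.
The polynomial `P_{n-k}^(k)` has degree `n - 2k` and the parity of `n`, so it is a combination
of the `P_{n-2k-2l}`; such a polynomial is determined by its derivatives of that parity at `1`,
and `P_{b+r}^(r)(1) = (b + 2r)! / (2^r r! b!)`. Matching these values is exactly the recurrence
for `α`, whence `P_{n-k}^(k) = ∑_l α(n, k+l, l) P_{n-2k-2l}`, and `α(n, K, K) = 0` for `K > 0`.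
Regrouping by `K = k + l` proves the theorem for `a ≠ 0`; both sides are continuous in `a`.
-/

/-- Legendre polynomial via Rodrigues' formula. -/
noncomputable def legendre (n : ℕ) : ℝ → ℝ :=
  fun x => (1 / (2 ^ n * (n.factorial : ℝ))) * iteratedDeriv n (fun y => (y ^ 2 - 1) ^ n) x

/-- Falling factorial of a real number: `x^{(m)} = x (x-1) ⋯ (x-m+1)`. -/
noncomputable def fallingFactorial (x : ℝ) (m : ℕ) : ℝ := ∏ i ∈ Finset.range m, (x - i)

open Polynomial Finset
open scoped Nat

theorem fallingFactorial_natCast (n k : ℕ) : fallingFactorial n k = n.descFactorial k := by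
  rw [fallingFactorial, ← descPochhammer_eval_eq_prod_range, descPochhammer_eval_eq_descFactorial]

theorem fallingFactorial_self (n : ℕ) : fallingFactorial n n = n ! := by
  rw [fallingFactorial_natCast, Nat.descFactorial_self]

theorem fallingFactorial_of_eq_add {x : ℝ} {b r : ℕ} (hx : x = b + r) :
    fallingFactorial x r = (b + r)! / b ! := by
  have h := Nat.factorial_mul_descFactorial (Nat.le_add_left r b)
  rw [Nat.add_sub_cancel] at h
  rw [eq_div_iff (by positivity), hx, ← Nat.cast_add, fallingFactorial_natCast, mul_comm]
  exact_mod_cast h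

theorem fallingFactorial_add_sub_half_mul (b r : ℕ) :
    4 ^ r * (b + r)! * (2 * b)! * fallingFactorial ((b : ℝ) + r - 1 / 2) r =
      (2 * (b + r))! * b ! := by
  induction r with
  | zero => simp [fallingFactorial, mul_comm]
  | succ r ih =>
    have hsucc : fallingFactorial ((b : ℝ) + (r + 1 : ℕ) - 1 / 2) (r + 1) =
        fallingFactorial ((b : ℝ) + r - 1 / 2) r * (b + r + 1 / 2) := by
      simp only [fallingFactorial, prod_range_succ', Nat.cast_add, Nat.cast_one, Nat.cast_zero]
      congr 1
      · exact prod_congr rfl fun i _ => by ring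
      · ring
    rw [hsucc, show 2 * (b + (r + 1)) = 2 * (b + r) + 1 + 1 by ring, ← add_assoc,
      Nat.factorial_succ, Nat.factorial_succ, Nat.factorial_succ]
    push_cast
    linear_combination (2 * ((b : ℝ) + r) + 2) * (2 * (b + r) + 1) * ih

theorem fallingFactorial_of_eq_add_sub_half {x : ℝ} {b r : ℕ} (hx : x = b + r - 1 / 2) :
    fallingFactorial x r = (2 * (b + r))! * b ! / (4 ^ r * (b + r)! * (2 * b)!) := by
  rw [eq_div_iff (by positivity), hx, ← fallingFactorial_add_sub_half_mul]
  ring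

namespace Polynomial

theorem iteratedDeriv_eval {𝕜 : Type*} [NontriviallyNormedField 𝕜] (p : 𝕜[X]) (k : ℕ) :
    iteratedDeriv k (fun x => p.eval x) = fun x => (derivative^[k] p).eval x := by
  induction k generalizing p with
  | zero => simp
  | succ k ih =>
    rw [iteratedDeriv_succ', _root_.funext fun x => p.deriv (x := x), ih,
      Function.iterate_succ_apply]

theorem natDegree_X_sq_sub_one_pow_le {R : Type*} [CommRing R] (n : ℕ) :
    (((X : R[X]) ^ 2 - 1) ^ n).natDegree ≤ 2 * n := by
  compute_degree
  omega

theorem iterate_derivative_X_sq_sub_one_pow_eval_one {R : Type*} [CommRing R] {m N : ℕ}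
    (h : m ≤ N) :
    (derivative^[N] (((X : R[X]) ^ 2 - 1) ^ m)).eval 1 =
      (N ! : R) * 2 ^ (m - (N - m)) * m.choose (N - m) := by
  have htaylor : taylor (1 : R) (((X : R[X]) ^ 2 - 1) ^ m) = (X : R[X]) ^ m * (X + C 2) ^ m := by
    rw [taylor_pow, ← mul_pow, taylor_apply]
    simp only [sub_comp, pow_comp, X_comp, one_comp, map_ofNat, C_1]
    ring
  rw [← factorial_smul_hasseDeriv, LinearMap.smul_apply, eval_smul, ← taylor_coeff, htaylor,
    coeff_X_pow_mul', if_pos h, coeff_X_add_C_pow, nsmul_eq_mul, mul_assoc]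

theorem iterate_derivative_natDegree_eval {R : Type*} [CommRing R] (p : R[X]) (a : R) :
    (derivative^[p.natDegree] p).eval a = p.natDegree ! • p.leadingCoeff := by
  rw [eq_C_of_natDegree_le_zero ((natDegree_iterate_derivative _ _).trans (Nat.sub_self _).le),
    eval_C, coeff_iterate_derivative, zero_add, Nat.descFactorial_self, leadingCoeff]

theorem eq_zero_of_iterate_derivative_eval_eq_zero {R : Type*} [CommRing R]
    [IsAddTorsionFree R] {p : R[X]} {N : ℕ} (a : R) (hdeg : p.natDegree ≤ N)
    (hpar : ∀ r, r % 2 ≠ N % 2 → p.coeff r = 0)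
    (hder : ∀ μ ≤ N, μ % 2 = N % 2 → (derivative^[μ] p).eval a = 0) : p = 0 := by
  by_contra hp
  have hlead : p.leadingCoeff ≠ 0 := leadingCoeff_ne_zero.mpr hp
  have hpar' : p.natDegree % 2 = N % 2 := by_contra fun h => hlead (hpar _ h)
  have h := hder _ hdeg hpar'
  rw [iterate_derivative_natDegree_eval, smul_eq_zero] at h
  exact h.elim (Nat.factorial_ne_zero _) hlead

theorem iterate_derivative_comp_C_mul_X {R : Type*} [CommSemiring R] (a : R) (p : R[X]) (k : ℕ) :
    derivative^[k] (p.comp (C a * X)) = C (a ^ k) * (derivative^[k] p).comp (C a * X) := by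
  induction k generalizing p with
  | zero => simp
  | succ k ih =>
    rw [Function.iterate_succ_apply, Function.iterate_succ_apply, derivative_comp,
      derivative_C_mul_X, iterate_derivative_C_mul, ih, pow_succ, C_mul]
    ring

theorem X_sq_sub_one_pow_comp_C_mul_X {R : Type*} [CommRing R] (a : R) (n : ℕ) :
    (((X : R[X]) ^ 2 - 1) ^ n).comp (C a * X) =
      ∑ j ∈ range (n + 1),
        C (a ^ (2 * j) * (a ^ 2 - 1) ^ (n - j) * n.choose j) * (X ^ 2 - 1) ^ j := by
  have h : ((X : R[X]) ^ 2 - 1).comp (C a * X) = C (a ^ 2) * (X ^ 2 - 1) + C (a ^ 2 - 1) := by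
    simp only [sub_comp, pow_comp, X_comp, one_comp, map_sub, map_pow, map_one]
    ring
  rw [pow_comp, h, add_pow]
  refine sum_congr rfl fun j _ => ?_
  simp only [mul_pow, map_mul, map_pow, map_natCast, ← pow_mul]
  ring

end Polynomial

noncomputable def legendrePoly (n : ℕ) : ℝ[X] :=
  C (1 / (2 ^ n * n ! : ℝ)) * derivative^[n] ((X ^ 2 - 1) ^ n)

theorem legendre_eq_eval (n : ℕ) (x : ℝ) : legendre n x = (legendrePoly n).eval x := by
  have h : (fun y : ℝ => (y ^ 2 - 1) ^ n) = fun y => (((X : ℝ[X]) ^ 2 - 1) ^ n).eval y := by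
    simp
  simp [legendre, legendrePoly, h, iteratedDeriv_eval]

theorem natDegree_legendrePoly_le (n : ℕ) : (legendrePoly n).natDegree ≤ n := by
  refine (natDegree_C_mul_le _ _).trans <| (natDegree_iterate_derivative _ _).trans ?_
  have := natDegree_X_sq_sub_one_pow_le (R := ℝ) n
  omega

theorem coeff_legendrePoly_eq_zero {n r : ℕ} (h : r % 2 ≠ n % 2) :
    (legendrePoly n).coeff r = 0 := by
  have hexp : ((X : ℝ[X]) ^ 2 - 1) ^ n = expand ℝ 2 ((X - 1) ^ n) := by simp
  rw [legendrePoly, coeff_C_mul, coeff_iterate_derivative, hexp, coeff_expand two_pos,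
    if_neg (by omega), smul_zero, mul_zero]

theorem iterate_derivative_legendrePoly_eval_one (b r : ℕ) :
    (derivative^[r] (legendrePoly (b + r))).eval 1 = (b + 2 * r)! / (2 ^ r * r ! * b !) := by
  rw [legendrePoly, iterate_derivative_C_mul, ← Function.iterate_add_apply, eval_mul, eval_C,
    iterate_derivative_X_sq_sub_one_pow_eval_one (by omega),
    show r + (b + r) - (b + r) = r by omega, show b + r - r = b by omega,
    show r + (b + r) = b + 2 * r by ring, Nat.cast_choose ℝ (Nat.le_add_left r b),
    Nat.add_sub_cancel, pow_add]
  field_simp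

theorem iterate_derivative_X_sq_sub_one_pow (k m : ℕ) :
    derivative^[k + m] (((X : ℝ[X]) ^ 2 - 1) ^ m) =
      C (2 ^ m * m ! : ℝ) * derivative^[k] (legendrePoly m) := by
  rw [Function.iterate_add_apply, legendrePoly, iterate_derivative_C_mul, ← mul_assoc, ← C_mul,
    mul_one_div_cancel (by positivity), C_1, one_mul]

theorem C_pow_mul_legendrePoly_comp_C_mul_X (a : ℝ) (n : ℕ) :
    C (a ^ n) * (legendrePoly n).comp (C a * X) =
      C (1 / (2 ^ n * n ! : ℝ)) *
        derivative^[n] ((((X : ℝ[X]) ^ 2 - 1) ^ n).comp (C a * X)) := by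
  rw [legendrePoly, mul_comp, C_comp, iterate_derivative_comp_C_mul_X]
  ring

theorem legendrePoly_comp_C_mul_X_eq_sum {a : ℝ} (ha : a ≠ 0) (n : ℕ) :
    (legendrePoly n).comp (C a * X) = ∑ k ∈ range (n / 2 + 1),
      C (a ^ (n - 2 * k) * (a ^ 2 - 1) ^ k / (2 ^ k * k !)) *
        derivative^[k] (legendrePoly (n - k)) := by
  have hvanish : ∀ k ∈ range (n + 1), k ∉ range (n / 2 + 1) →
      C (1 / (2 ^ n * n ! : ℝ)) * derivative^[n]
        (C (a ^ (2 * (n - k)) * (a ^ 2 - 1) ^ (n - (n - k)) * n.choose (n - k)) *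
          ((X : ℝ[X]) ^ 2 - 1) ^ (n - k)) = 0 := by
    intro k hk hk'
    rw [mem_range] at hk hk'
    rw [iterate_derivative_C_mul, iterate_derivative_eq_zero
      ((natDegree_X_sq_sub_one_pow_le (n - k)).trans_lt (by omega)), mul_zero, mul_zero]
  refine mul_left_cancel₀ (C_ne_zero.mpr (pow_ne_zero n ha)) ?_
  rw [C_pow_mul_legendrePoly_comp_C_mul_X, X_sq_sub_one_pow_comp_C_mul_X, iterate_derivative_sum,
    mul_sum, ← sum_range_reflect]
  simp only [Nat.add_sub_cancel]
  rw [← sum_subset (range_subset_range.mpr (by omega)) hvanish, mul_sum]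
  refine sum_congr rfl fun k hk => ?_
  rw [mem_range] at hk
  have hderiv := iterate_derivative_X_sq_sub_one_pow k (n - k)
  rw [show k + (n - k) = n by omega] at hderiv
  have hpow : a ^ (2 * (n - k)) = a ^ n * a ^ (n - 2 * k) := by
    rw [← pow_add]
    congr 1
    omega
  have htwo : (2 : ℝ) ^ n = 2 ^ (n - k) * 2 ^ k := by
    rw [← pow_add]
    congr 1
    omega
  rw [iterate_derivative_C_mul, hderiv, ← mul_assoc, ← mul_assoc, ← mul_assoc, ← C_mul,
    ← C_mul, ← C_mul, Nat.cast_choose ℝ (Nat.sub_le n k), show n - (n - k) = k by omega, hpow,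
    htwo]
  congr 2
  field_simp

noncomputable def scalingLeadingTerm (n k i : ℕ) : ℝ :=
  2 ^ (k + i) * fallingFactorial ((n : ℝ) - k + i - 1 / 2) (k - i) *
      fallingFactorial ((n : ℝ) - k) i *
      fallingFactorial ((n : ℝ) - 2 * k + 2 * i - 1 / 2) (2 * i) /
    (fallingFactorial ((2 * i : ℕ) : ℝ) (2 * i) *
      fallingFactorial ((n : ℝ) - k + i - 1 / 2) i)

noncomputable def scalingWeight (n k i l : ℕ) : ℝ :=
  fallingFactorial (2 * ((n : ℝ) - 2 * k + i - l)) (2 * (i - l)) /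
    fallingFactorial (2 * ((i : ℝ) - l)) (2 * (i - l))

def IsLegendreScalingCoeff (α : ℕ → ℕ → ℕ → ℝ) : Prop :=
  ∀ n k i : ℕ, 2 * k ≤ n → 2 * i ≤ 2 * k →
    α n k i =
      scalingLeadingTerm n k i - ∑ l ∈ range i, scalingWeight n k i l * α n (k - i + l) l

theorem scalingLeadingTerm_mul (d j μ : ℕ) :
    scalingLeadingTerm (2 * d + 2 * j + μ) (d + j) j * ((2 * μ)! / (2 ^ μ * μ !)) =
      (2 * j + 2 * (d + μ))! / (2 ^ (d + μ) * (d + μ)! * (2 * j)!) := by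
  rw [scalingLeadingTerm, Nat.add_sub_cancel, fallingFactorial_self,
    fallingFactorial_of_eq_add_sub_half (b := 2 * j + μ) (r := d) (by push_cast; ring),
    fallingFactorial_of_eq_add (b := d + μ) (r := j) (by push_cast; ring),
    fallingFactorial_of_eq_add_sub_half (b := μ) (r := 2 * j) (by push_cast; ring),
    fallingFactorial_of_eq_add_sub_half (b := d + j + μ) (r := j) (by push_cast; ring)]
  simp only [show (4 : ℝ) = 2 ^ 2 by norm_num, ← pow_mul]
  field_simp
  ring_nf

theorem scalingWeight_eq {d j μ l : ℕ} (hl : l < j) :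
    scalingWeight (2 * d + 2 * j + μ) (d + j) j l =
      (2 * (j - l) + 2 * μ)! / ((2 * μ)! * (2 * (j - l))!) := by
  rw [scalingWeight,
    fallingFactorial_of_eq_add (b := 2 * μ) (r := 2 * (j - l)) (by push_cast [hl.le]; ring),
    show 2 * ((j : ℝ) - l) = ((2 * (j - l) : ℕ) : ℝ) by push_cast [hl.le]; ring,
    fallingFactorial_self]
  ring_nf

namespace IsLegendreScalingCoeff

variable {α : ℕ → ℕ → ℕ → ℝ}

theorem sum_mul_iterate_derivative_eval_one (hα : IsLegendreScalingCoeff α) (d j μ : ℕ) :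
    ∑ l ∈ range (j + 1), α (2 * d + 2 * j + μ) (d + l) l *
        (derivative^[μ] (legendrePoly (2 * (j - l) + μ))).eval 1 =
      (derivative^[d + μ] (legendrePoly (2 * j + (d + μ)))).eval 1 := by
  have hweight : ∀ l ∈ range j,
      scalingWeight (2 * d + 2 * j + μ) (d + j) j l * α (2 * d + 2 * j + μ) (d + l) l *
          ((2 * μ)! / (2 ^ μ * μ !)) =
        α (2 * d + 2 * j + μ) (d + l) l *
          ((2 * (j - l) + 2 * μ)! / (2 ^ μ * μ ! * (2 * (j - l))!)) := by
    intro l hl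
    rw [scalingWeight_eq (mem_range.mp hl)]
    field_simp
  simp only [iterate_derivative_legendrePoly_eval_one]
  rw [sum_range_succ, hα _ (d + j) j (by omega) (by omega)]
  simp only [Nat.add_sub_cancel, Nat.sub_self, mul_zero, zero_add, Nat.factorial_zero,
    Nat.cast_one, mul_one]
  rw [sub_mul, sum_mul, sum_congr rfl hweight, scalingLeadingTerm_mul]
  ring

theorem iterate_derivative_legendrePoly (hα : IsLegendreScalingCoeff α) {n d : ℕ}
    (hd : 2 * d ≤ n) :
    derivative^[d] (legendrePoly (n - d)) =
      ∑ l ∈ range ((n - 2 * d) / 2 + 1),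
        α n (d + l) l • legendrePoly (n - 2 * d - 2 * l) := by
  rw [← sub_eq_zero]
  apply eq_zero_of_iterate_derivative_eval_eq_zero (N := n - 2 * d) 1
  · refine (natDegree_sub_le _ _).trans
      (max_le ?_ (natDegree_sum_le_of_forall_le _ _ fun l _ => ?_))
    · have := natDegree_legendrePoly_le (n - d)
      exact (natDegree_iterate_derivative _ _).trans (by omega)
    · exact (natDegree_smul_le _ _).trans ((natDegree_legendrePoly_le _).trans (by omega))
  · intro r hr
    rw [coeff_sub, coeff_iterate_derivative, coeff_legendrePoly_eq_zero (by omega),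
      finsetSum_coeff, sum_eq_zero fun l hl => ?_, smul_zero, sub_zero]
    rw [coeff_smul, coeff_legendrePoly_eq_zero (by simp at hl; omega), smul_zero]
  · intro μ hμ hpar
    obtain ⟨j, rfl⟩ : ∃ j, n = 2 * d + 2 * j + μ := ⟨(n - 2 * d - μ) / 2, by omega⟩
    rw [show 2 * d + 2 * j + μ - 2 * d = 2 * j + μ by omega]
    have hvanish : ∀ l ∈ range ((2 * j + μ) / 2 + 1), l ∉ range (j + 1) →
        (derivative^[μ] (α (2 * d + 2 * j + μ) (d + l) l •
          legendrePoly (2 * j + μ - 2 * l))).eval 1 = 0 := by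
      intro l hl hl'
      rw [mem_range] at hl hl'
      rw [iterate_derivative_smul, iterate_derivative_eq_zero
        ((natDegree_legendrePoly_le (2 * j + μ - 2 * l)).trans_lt (by omega)), smul_zero,
        eval_zero]
    rw [iterate_derivative_sub, iterate_derivative_sum, eval_sub, eval_finsetSum, sub_eq_zero,
      ← sum_subset (range_subset_range.mpr (by omega)) hvanish, ← Function.iterate_add_apply,
      add_comm μ d, show 2 * d + 2 * j + μ - d = 2 * j + (d + μ) by omega,
      ← hα.sum_mul_iterate_derivative_eval_one]
    refine sum_congr rfl fun l hl => ?_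
    rw [iterate_derivative_smul, eval_smul, smul_eq_mul,
      show 2 * j + μ - 2 * l = 2 * (j - l) + μ by rw [mem_range] at hl; omega]

theorem apply_self (hα : IsLegendreScalingCoeff α) {n K : ℕ} (hK : 2 * K ≤ n) :
    α n K K = if K = 0 then 1 else 0 := by
  induction K using Nat.strong_induction_on with
  | _ K ih =>
  obtain ⟨μ, rfl⟩ : ∃ μ, n = 2 * K + μ := ⟨n - 2 * K, by omega⟩
  have hv : (derivative^[μ] (legendrePoly μ)).eval 1 ≠ 0 := by
    have h := iterate_derivative_legendrePoly_eval_one 0 μ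
    rw [zero_add] at h
    rw [h]
    positivity
  have h := hα.sum_mul_iterate_derivative_eval_one 0 K μ
  simp only [mul_zero, zero_add] at h
  rw [sum_range_succ, Nat.sub_self, mul_zero, zero_add] at h
  rcases Nat.eq_zero_or_pos K with rfl | hpos
  · simpa [hv] using h
  · have hsum : ∑ l ∈ range K,
          α (2 * K + μ) l l * (derivative^[μ] (legendrePoly (2 * (K - l) + μ))).eval 1 =
        (derivative^[μ] (legendrePoly (2 * K + μ))).eval 1 := by
      rw [sum_eq_single_of_mem 0 (mem_range.mpr hpos) fun l hl hl0 => ?_]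
      · rw [ih 0 hpos (by omega), if_pos rfl, one_mul, Nat.sub_zero]
      · rw [mem_range] at hl
        rw [ih l hl (by omega), if_neg hl0, zero_mul]
    rw [if_neg hpos.ne', ← mul_left_inj' hv, zero_mul]
    linarith

theorem sum_mul_range_max_sub_one (hα : IsLegendreScalingCoeff α) {n K : ℕ} (hK : 2 * K ≤ n)
    (f : ℕ → ℝ) :
    ∑ i ∈ range (max (K - 1) 0 + 1), f i * α n K i =
      ∑ i ∈ range (K + 1), f i * α n K i := by
  rcases Nat.eq_zero_or_pos K with rfl | hpos
  · rfl
  · rw [show max (K - 1) 0 + 1 = K by omega, sum_range_succ, hα.apply_self hK, if_neg hpos.ne',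
      mul_zero, add_zero]

theorem legendrePoly_comp_C_mul_X (hα : IsLegendreScalingCoeff α) {a : ℝ} (ha : a ≠ 0)
    (n : ℕ) :
    (legendrePoly n).comp (C a * X) = ∑ K ∈ range (n / 2 + 1),
      C (∑ i ∈ range (max (K - 1) 0 + 1), a ^ (n - 2 * K + 2 * i) / (2 ^ (K - i) * (K - i)!) *
        (a ^ 2 - 1) ^ (K - i) * α n K i) * legendrePoly (n - 2 * K) := by
  have hexpand : ∀ k ∈ range (n / 2 + 1),
      C (a ^ (n - 2 * k) * (a ^ 2 - 1) ^ k / (2 ^ k * k !)) *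
          derivative^[k] (legendrePoly (n - k)) =
        ∑ l ∈ range (n / 2 + 1 - k), C (a ^ (n - 2 * k) * (a ^ 2 - 1) ^ k / (2 ^ k * k !) *
          α n (k + l) l) * legendrePoly (n - 2 * k - 2 * l) := by
    intro k hk
    rw [mem_range] at hk
    rw [hα.iterate_derivative_legendrePoly (by omega), mul_sum,
      show (n - 2 * k) / 2 + 1 = n / 2 + 1 - k by omega]
    simp only [smul_eq_C_mul, ← mul_assoc, ← C_mul]
  rw [legendrePoly_comp_C_mul_X_eq_sum ha, sum_congr rfl hexpand, ← sum_range_diag_flip]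
  refine sum_congr rfl fun K hK => ?_
  rw [mem_range] at hK
  rw [hα.sum_mul_range_max_sub_one (by omega), map_sum, sum_mul, ← sum_range_reflect]
  refine sum_congr rfl fun i hi => ?_
  rw [mem_range] at hi
  rw [Nat.add_sub_cancel, Nat.sub_sub_self (by omega), Nat.sub_add_cancel (by omega),
    show n - 2 * (K - i) - 2 * i = n - 2 * K by omega,
    show n - 2 * (K - i) = n - 2 * K + 2 * i by omega]
  ring_nf

end IsLegendreScalingCoeff

theorem legendre_scaling_legendre_expansion
    (α : ℕ → ℕ → ℕ → ℝ)
    (hα : ∀ n k i : ℕ, 2 * k ≤ n → 2 * i ≤ 2 * k →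
      α n k i =
        2 ^ (k + i) * fallingFactorial ((n : ℝ) - k + i - 1 / 2) (k - i) *
            fallingFactorial ((n : ℝ) - k) i *
            fallingFactorial ((n : ℝ) - 2 * k + 2 * i - 1 / 2) (2 * i) /
          (fallingFactorial ((2 * i : ℕ) : ℝ) (2 * i) *
            fallingFactorial ((n : ℝ) - k + i - 1 / 2) i) -
        ∑ l ∈ Finset.range i,
          (fallingFactorial (2 * ((n : ℝ) - 2 * k + i - l)) (2 * (i - l)) /
              fallingFactorial (2 * ((i : ℝ) - l)) (2 * (i - l))) * α n (k - i + l) l) :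
    ∀ (n : ℕ) (lam : ℝ) (x : ℝ),
      legendre n (lam * x) =
        ∑ k ∈ Finset.range (n / 2 + 1),
          (∑ i ∈ Finset.range (max (k - 1) 0 + 1),
              (lam ^ (n - 2 * k + 2 * i) / (2 ^ (k - i) * ((k - i).factorial : ℝ))) *
                (lam ^ 2 - 1) ^ (k - i) * α n k i) *
            legendre (n - 2 * k) x := by
  intro n lam x
  revert lam
  refine congrFun
    (Continuous.ext_on (X := ℝ) (dense_compl_singleton 0) ?_ ?_ fun t (ht : t ≠ 0) => ?_)
  · simp only [legendre_eq_eval]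
    fun_prop
  · fun_prop
  · rw [legendre_eq_eval, show t * x = (C t * X).eval x by simp, ← eval_comp,
      IsLegendreScalingCoeff.legendrePoly_comp_C_mul_X hα ht, eval_finsetSum]
    simp only [eval_mul, eval_C, legendre_eq_eval]
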